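/- For m, n ≥ 2 and any σ > 0, the convex 1-smooth function f(X) := (1/2)‖X − A‖_F² on ℝ^{m×n}, where A = diag(1 + σ, σ, …, σ), has a unique minimizer X* over the unit trace-norm ball, namely X* = E_{1,1} (the matrix with 1 in entry (1,1) and zeros elsewhere), which has rank one, while ∇f(X*) = diag(−σ, …, −σ), so that #σ_1(∇f(X*)) = min{m,n}. In particular, the inequality max{rank(X) : X ∈ 𝒳*} ≤ min{#σ_1(∇f(Y)) : Y ∈ 𝒳*} can be strict. -/

import Mathlib

/-
Write `f Z = ½‖Z - A‖_F²` and let `J` be the rectangular identity. Expanding `f` around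
`E = E_{1,1}` gives `f Z = f E + ⟪E - A, Z - E⟫ + ½‖Z - E‖_F²`, and `E - A = -σ J`, so the linear
term is `σ (1 - ⟪J, Z⟫)`. Since `J` is a contraction, `⟪J, Z⟫ ≤ ‖Z‖_*` (evaluate `⟪J, Z⟫` in an
orthonormal eigenbasis of `Zᵀ Z` and apply Cauchy–Schwarz column by column), so on the unit ball
`f Z ≥ f E`, with equality only at `Z = E`.

For a rectangular diagonal matrix `X`, `Xᵀ X` is diagonal, and the eigenvalues of a diagonal
matrix are its diagonal entries (the roots of its characteristic polynomial); hence the singular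
values of `X` are the absolute values of its diagonal entries, padded with zeros. This gives
`‖E‖_* = 1`, `rank E = 1` and `#σ₁(-σ J) = min m n`.
-/

/- Common definitions: Frobenius norm and inner product, singular values in
non-increasing order, trace (nuclear) norm, multiplicity of the top singular
value, Euclidean projection onto the trace-norm ball, the spectrahedron and its
projection, sorted eigenvalues of symmetric matrices, best rank-`r`
approximations, and the singular-value soft-thresholding (prox) operator. -/

open scoped BigOperators
open Matrix MeasureTheory ProbabilityTheory

attribute [local instance] Matrix.normedAddCommGroup Matrix.normedSpace

noncomputable section

/-- Frobenius norm of a real matrix. -/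
def frobNorm {m n : ℕ} (X : Matrix (Fin m) (Fin n) ℝ) : ℝ :=
  Real.sqrt (∑ i, ∑ j, (X i j) ^ 2)

/-- Frobenius inner product of two real matrices. -/
def frobInner {m n : ℕ} (A B : Matrix (Fin m) (Fin n) ℝ) : ℝ :=
  ∑ i, ∑ j, A i j * B i j

/-- The continuous linear functional `H ↦ ⟨G, H⟩` (Frobenius inner product);
`HasFDerivAt f (frobCLM G) X` says that `G` is the gradient of `f` at `X`. -/
def frobCLM {m n : ℕ} (G : Matrix (Fin m) (Fin n) ℝ) :
    Matrix (Fin m) (Fin n) ℝ →L[ℝ] ℝ :=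
  LinearMap.toContinuousLinearMap
    { toFun := fun H => frobInner G H
      map_add' := fun x y => by
        simp [frobInner, Matrix.add_apply, mul_add, Finset.sum_add_distrib]
      map_smul' := fun c x => by
        simp [frobInner, Matrix.smul_apply, smul_eq_mul, Finset.mul_sum, mul_left_comm] }

/-- The non-increasing (descending) rearrangement of a finite tuple of reals. -/
def sortedDesc {N : ℕ} (f : Fin N → ℝ) : Fin N → ℝ :=
  fun i => f (Tuple.sort f i.rev)

/-- The singular values of a real `m × n` matrix in non-increasing order
(the square roots of the eigenvalues of `Xᵀ * X`), padded with zeros so that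
there are `n` of them. -/
def svalsFin {m n : ℕ} (X : Matrix (Fin m) (Fin n) ℝ) : Fin n → ℝ :=
  sortedDesc (fun i => Real.sqrt (((by simpa [Matrix.conjTranspose_eq_transpose_of_trivial] using
    Matrix.isHermitian_conjTranspose_mul_self X : (Xᵀ * X).IsHermitian)).eigenvalues i))

/-- `svalI X i` is the `(i+1)`-th largest singular value of `X` (i.e. `0`-indexed:
`svalI X 0 = σ₁(X)`), interpreted as `0` when the index is out of range. -/
def svalI {m n : ℕ} (X : Matrix (Fin m) (Fin n) ℝ) (i : ℕ) : ℝ :=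
  if h : i < n then svalsFin X ⟨i, h⟩ else 0

/-- The trace norm (nuclear norm): the sum of the singular values. -/
def traceNorm {m n : ℕ} (X : Matrix (Fin m) (Fin n) ℝ) : ℝ :=
  ∑ i, svalsFin X i

/-- `#σ₁(X)`: the multiplicity of the largest singular value of `X`. -/
def multTop {m n : ℕ} (X : Matrix (Fin m) (Fin n) ℝ) : ℕ :=
  Nat.card {i : Fin n // svalsFin X i = svalI X 0}

/-- `P` is the Euclidean (Frobenius) projection of `X` onto the trace-norm ball
of radius `τ`. -/
def IsTraceBallProj {m n : ℕ} (τ : ℝ) (X P : Matrix (Fin m) (Fin n) ℝ) : Prop :=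
  traceNorm P ≤ τ ∧ ∀ Z, traceNorm Z ≤ τ → frobNorm (X - P) ≤ frobNorm (X - Z)

/-- The Euclidean projection onto the trace-norm ball of radius `τ`. -/
def projTraceBall {m n : ℕ} (τ : ℝ) (X : Matrix (Fin m) (Fin n) ℝ) :
    Matrix (Fin m) (Fin n) ℝ :=
  open scoped Classical in
  if h : ∃ P, IsTraceBallProj τ X P then h.choose else 0

/-- `Y` is a best rank-`r` approximation of `X` in Frobenius norm. -/
def IsBestRankApprox {m n : ℕ} (r : ℕ) (X Y : Matrix (Fin m) (Fin n) ℝ) : Prop :=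
  Y.rank ≤ r ∧ ∀ Z : Matrix (Fin m) (Fin n) ℝ, Z.rank ≤ r → frobNorm (X - Y) ≤ frobNorm (X - Z)

/-- The spectrahedron: positive semidefinite matrices of unit trace. -/
def SpectraSet (n : ℕ) : Set (Matrix (Fin n) (Fin n) ℝ) :=
  {X | X.PosSemidef ∧ X.trace = 1}

/-- `P` is the Euclidean (Frobenius) projection of `X` onto the spectrahedron. -/
def IsSpectraProj {n : ℕ} (X P : Matrix (Fin n) (Fin n) ℝ) : Prop :=
  P ∈ SpectraSet n ∧ ∀ Z ∈ SpectraSet n, frobNorm (X - P) ≤ frobNorm (X - Z)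

/-- The Euclidean projection onto the spectrahedron. -/
def projSpectra {n : ℕ} (X : Matrix (Fin n) (Fin n) ℝ) : Matrix (Fin n) (Fin n) ℝ :=
  open scoped Classical in
  if h : ∃ P, IsSpectraProj X P then h.choose else 0

/-- `evalI X i` is the `(i+1)`-th largest eigenvalue of the symmetric matrix `X`
(`0`-indexed: `evalI X 0 = λ₁(X)`, `evalI X (n-1) = λ_n(X)`); junk value `0` if
`X` is not symmetric or the index is out of range. -/
def evalI {n : ℕ} (X : Matrix (Fin n) (Fin n) ℝ) (i : ℕ) : ℝ :=
  open scoped Classical in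
  if h : i < n then
    (if hX : X.IsHermitian then sortedDesc hX.eigenvalues ⟨i, h⟩ else 0)
  else 0

/-- The multiplicity of the smallest eigenvalue of a symmetric matrix. -/
def multMinEig {n : ℕ} (X : Matrix (Fin n) (Fin n) ℝ) : ℕ :=
  Nat.card {i : Fin n // evalI X i = evalI X (n - 1)}

/-- `Y` is the value at `X` of the singular-value soft-thresholding operator
`𝒯_η`, characterized as the proximal mapping of `η‖·‖_*`:
the (unique) minimizer of `Z ↦ ½‖X − Z‖_F² + η‖Z‖_*`. -/
def IsSVT {m n : ℕ} (η : ℝ) (X Y : Matrix (Fin m) (Fin n) ℝ) : Prop :=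
  ∀ Z : Matrix (Fin m) (Fin n) ℝ,
    frobNorm (X - Y) ^ 2 / 2 + η * traceNorm Y ≤ frobNorm (X - Z) ^ 2 / 2 + η * traceNorm Z

/-- The singular-value soft-thresholding operator `𝒯_η`. -/
def softThresh {m n : ℕ} (η : ℝ) (X : Matrix (Fin m) (Fin n) ℝ) :
    Matrix (Fin m) (Fin n) ℝ :=
  open scoped Classical in
  if h : ∃ Y, IsSVT η X Y then h.choose else 0

instance {m n : ℕ} : MeasurableSpace (Matrix (Fin m) (Fin n) ℝ) :=
  inferInstanceAs (MeasurableSpace (Fin m → Fin n → ℝ))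

end

/-- The matrix `A = diag(1+σ, σ, …, σ) ∈ ℝ^{m×n}`. -/
noncomputable def Amat (m n : ℕ) (σ : ℝ) : Matrix (Fin m) (Fin n) ℝ :=
  Matrix.of fun i j =>
    if (i : ℕ) = (j : ℕ) then (if (i : ℕ) = 0 then 1 + σ else σ) else 0

/-- The matrix `E_{1,1} ∈ ℝ^{m×n}` with a single `1` in its top-left entry. -/
noncomputable def Emat (m n : ℕ) : Matrix (Fin m) (Fin n) ℝ :=
  Matrix.of fun i j => if (i : ℕ) = 0 ∧ (j : ℕ) = 0 then 1 else 0

open Finset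

section Frobenius

variable {m n : ℕ}

def frobEquiv : Matrix (Fin m) (Fin n) ℝ ≃ₗ[ℝ] EuclideanSpace ℝ (Fin m × Fin n) where
  toFun X := WithLp.toLp 2 fun p => X p.1 p.2
  invFun v := Matrix.of fun i j => v (i, j)
  map_add' _ _ := rfl
  map_smul' _ _ := rfl
  left_inv _ := rfl
  right_inv _ := rfl

@[simp]
lemma frobEquiv_apply (X : Matrix (Fin m) (Fin n) ℝ) (p : Fin m × Fin n) :
    frobEquiv X p = X p.1 p.2 := rfl

lemma frobNorm_eq_norm (X : Matrix (Fin m) (Fin n) ℝ) : frobNorm X = ‖frobEquiv X‖ := by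
  simp [frobNorm, EuclideanSpace.norm_eq, Fintype.sum_prod_type]

lemma frobInner_eq_inner (A B : Matrix (Fin m) (Fin n) ℝ) :
    frobInner A B = inner ℝ (frobEquiv A) (frobEquiv B) := by
  simp [frobInner, PiLp.inner_apply, Fintype.sum_prod_type, mul_comm]

lemma frobNorm_eq_zero {X : Matrix (Fin m) (Fin n) ℝ} : frobNorm X = 0 ↔ X = 0 := by
  rw [frobNorm_eq_norm, norm_eq_zero, LinearEquiv.map_eq_zero_iff]

lemma frobNorm_sub_sq_div_two (A Y Z : Matrix (Fin m) (Fin n) ℝ) :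
    frobNorm (Z - A) ^ 2 / 2 =
      frobNorm (Y - A) ^ 2 / 2 + frobInner (Y - A) (Z - Y) + frobNorm (Z - Y) ^ 2 / 2 := by
  have h := norm_add_sq_real (frobEquiv (Y - A)) (frobEquiv (Z - Y))
  rw [← map_add, sub_add_sub_cancel'] at h
  rw [frobNorm_eq_norm, frobNorm_eq_norm, frobNorm_eq_norm, frobInner_eq_inner, h]
  ring

lemma convexOn_frobNorm_sub_sq_div_two (A : Matrix (Fin m) (Fin n) ℝ) :
    ConvexOn ℝ Set.univ fun X : Matrix (Fin m) (Fin n) ℝ => frobNorm (X - A) ^ 2 / 2 := by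
  have h := ((((convexOn_univ_dist (frobEquiv A)).pow (fun _ _ => dist_nonneg) 2).comp_linearMap
    frobEquiv.toLinearMap).smul (c := (1 / 2 : ℝ)) (by norm_num))
  rw [Set.preimage_univ] at h
  refine h.congr fun X _ => ?_
  simp only [frobNorm_eq_norm, map_sub, dist_eq_norm, LinearEquiv.coe_coe, Function.comp_apply,
    Pi.pow_apply, smul_eq_mul]
  ring

lemma hasFDerivAt_frobNorm_sub_sq_div_two (A X : Matrix (Fin m) (Fin n) ℝ) :
    HasFDerivAt (fun X : Matrix (Fin m) (Fin n) ℝ => frobNorm (X - A) ^ 2 / 2)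
      (frobCLM (X - A)) X := by
  let e := (frobEquiv (m := m) (n := n)).toContinuousLinearEquiv
  have h := ((e.hasFDerivAt (x := X)).sub_const (e A)).norm_sq.mul_const (1 / 2)
  have hf : (fun X : Matrix (Fin m) (Fin n) ℝ => frobNorm (X - A) ^ 2 / 2)
      = fun X => ‖e X - e A‖ ^ 2 * (1 / 2) := by
    ext Y
    simp only [frobNorm_eq_norm, map_sub, LinearEquiv.coe_toContinuousLinearEquiv', e]
    ring
  rw [hf]
  refine h.congr_fderiv ?_
  ext H
  change _ = frobInner (X - A) H
  simp only [frobInner_eq_inner, inner_sub_left, map_sub, LinearEquiv.coe_toContinuousLinearEquiv',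
    ContinuousLinearMap.sub_comp, _root_.smul_apply, _root_.sub_apply,
    ContinuousLinearMap.comp_apply, coe_innerSL_apply, nsmul_eq_mul, Nat.cast_ofNat, smul_eq_mul,
    one_div, ne_eq, OfNat.ofNat_ne_zero, not_false_eq_true, inv_mul_cancel_left₀, e]
  -- the sides differ only in the coercion of `frobEquiv.toContinuousLinearEquiv` to a function
  rfl

end Frobenius

section SingularValues

variable {m n : ℕ}

lemma antitone_sortedDesc {N : ℕ} (f : Fin N → ℝ) : Antitone (sortedDesc f) :=
  (Tuple.monotone_sort f).comp_antitone Fin.rev_anti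

lemma map_sortedDesc {N : ℕ} (f : Fin N → ℝ) :
    univ.val.map (sortedDesc f) = univ.val.map f := by
  have : sortedDesc f = f ∘ (Fin.revPerm.trans (Tuple.sort f)) := rfl
  rw [this, ← Multiset.map_map, Multiset.map_univ_val_equiv]

lemma traceNorm_eq_sum_sqrt_eigenvalues (X : Matrix (Fin m) (Fin n) ℝ)
    (hH : (Xᵀ * X).IsHermitian) : traceNorm X = ∑ k, √(hH.eigenvalues k) := by
  rw [traceNorm, sum_eq_multiset_sum, svalsFin, map_sortedDesc, ← sum_eq_multiset_sum]

lemma Matrix.IsHermitian.map_eigenvalues_of_eq_diagonal {A : Matrix (Fin n) (Fin n) ℝ}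
    (hA : A.IsHermitian) {d : Fin n → ℝ} (h : A = diagonal d) :
    univ.val.map hA.eigenvalues = univ.val.map d := by
  have hroots : A.charpoly.roots = univ.val.map d := by
    rw [h, charpoly_diagonal, Finset.prod_eq_multiset_prod,
      ← Polynomial.roots_multiset_prod_X_sub_C (univ.val.map d), Multiset.map_map]
    rfl
  rw [hA.roots_charpoly_eq_eigenvalues] at hroots
  simpa using hroots

lemma map_svalsFin_of_transpose_mul_self_eq_diagonal {X : Matrix (Fin m) (Fin n) ℝ}
    {d : Fin n → ℝ} (hX : Xᵀ * X = diagonal d) :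
    univ.val.map (svalsFin X) = univ.val.map fun j => √(d j) := by
  have hH : (Xᵀ * X).IsHermitian := by simpa using isHermitian_conjTranspose_mul_self X
  rw [svalsFin, map_sortedDesc]
  change univ.val.map (Real.sqrt ∘ hH.eigenvalues) = _
  rw [← Multiset.map_map,
    hH.map_eigenvalues_of_eq_diagonal hX, Multiset.map_map]
  rfl

lemma card_filter_eq_of_map_eq {ι α : Type*} [Fintype ι] {f g : ι → α}
    (h : univ.val.map f = univ.val.map g) (p : α → Prop) [DecidablePred p] :
    #{i | p (f i)} = #{i | p (g i)} := by
  rw [card_def, card_def, filter_val, filter_val, ← Multiset.countP_map, ← Multiset.countP_map, h]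

variable {X : Matrix (Fin m) (Fin n) ℝ} {g : Fin n → ℝ}

lemma traceNorm_eq_sum_of_map_svalsFin (h : univ.val.map (svalsFin X) = univ.val.map g) :
    traceNorm X = ∑ j, g j := by
  rw [traceNorm, sum_eq_multiset_sum, h, ← sum_eq_multiset_sum]

lemma multTop_eq_card_of_map_svalsFin (h : univ.val.map (svalsFin X) = univ.val.map g) :
    multTop X = #{j | g j = svalI X 0} := by
  rw [multTop, Nat.card_eq_fintype_card, Fintype.card_subtype]
  exact card_filter_eq_of_map_eq h (· = svalI X 0)

lemma svalI_zero_eq_of_map_svalsFin (h : univ.val.map (svalsFin X) = univ.val.map g) {c : ℝ}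
    (hc : IsGreatest (Set.range g) c) : svalI X 0 = c := by
  obtain ⟨⟨j₀, rfl⟩, hle⟩ := hc
  have hn : 0 < n := j₀.pos
  have hmem : ∀ x, (∃ i, svalsFin X i = x) ↔ ∃ j, g j = x := fun x => by
    simpa using congrArg (x ∈ ·) h
  rw [svalI, dif_pos hn]
  apply le_antisymm
  · obtain ⟨j, hj⟩ := (hmem _).1 ⟨_, rfl⟩
    exact hj ▸ hle ⟨j, rfl⟩
  · obtain ⟨i, hi⟩ := (hmem _).2 ⟨j₀, rfl⟩
    exact hi ▸ antitone_sortedDesc _ (Nat.zero_le i : (⟨0, hn⟩ : Fin n) ≤ i)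

end SingularValues

section RectDiagonal

variable {m n : ℕ}

def rectDiagonal (m n : ℕ) (c : ℕ → ℝ) : Matrix (Fin m) (Fin n) ℝ :=
  Matrix.of fun i j => if (i : ℕ) = (j : ℕ) then c i else 0

lemma transpose_rectDiagonal_mul_self (c : ℕ → ℝ) :
    (rectDiagonal m n c)ᵀ * rectDiagonal m n c =
      diagonal fun j : Fin n => if (j : ℕ) < m then c j ^ 2 else 0 := by
  ext j k
  simp only [mul_apply, transpose_apply, rectDiagonal, of_apply, diagonal_apply]
  by_cases hj : (j : ℕ) < m
  · rw [Fintype.sum_eq_single ⟨j, hj⟩ fun i hi => by simp [Fin.val_ne_iff.2 hi]]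
    rcases eq_or_ne j k with rfl | hjk
    · simp [hj, sq]
    · simp [hjk, Fin.val_ne_iff.2 hjk]
  · have hij (i : Fin m) : (i : ℕ) ≠ j := by omega
    simp [hj, hij]

lemma map_svalsFin_rectDiagonal (c : ℕ → ℝ) :
    univ.val.map (svalsFin (rectDiagonal m n c)) =
      univ.val.map fun j : Fin n => if (j : ℕ) < m then |c j| else 0 := by
  rw [map_svalsFin_of_transpose_mul_self_eq_diagonal (transpose_rectDiagonal_mul_self c)]
  congr 1
  ext j
  split_ifs <;> simp [Real.sqrt_sq_eq_abs]

lemma traceNorm_rectDiagonal (c : ℕ → ℝ) :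
    traceNorm (rectDiagonal m n c) = ∑ j : Fin n, if (j : ℕ) < m then |c j| else 0 :=
  traceNorm_eq_sum_of_map_svalsFin (map_svalsFin_rectDiagonal c)

lemma rank_rectDiagonal (c : ℕ → ℝ) :
    (rectDiagonal m n c).rank = #{j : Fin n | (j : ℕ) < m ∧ c j ≠ 0} := by
  rw [← rank_transpose_mul_self, transpose_rectDiagonal_mul_self, rank_diagonal,
    Fintype.card_subtype]
  congr 1
  ext j
  simp only [mem_filter, mem_univ, true_and]
  split_ifs <;> simp [*]

lemma multTop_rectDiagonal_const (hm : 0 < m) (hn : 0 < n) {c : ℝ} (hc : c ≠ 0) :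
    multTop (rectDiagonal m n fun _ => c) = min m n := by
  have h := map_svalsFin_rectDiagonal (m := m) (n := n) fun _ => c
  have htop : svalI (rectDiagonal m n fun _ => c) 0 = |c| := by
    refine svalI_zero_eq_of_map_svalsFin h ⟨⟨⟨0, hn⟩, if_pos hm⟩, ?_⟩
    rintro _ ⟨j, rfl⟩
    dsimp only
    split_ifs <;> simp
  rw [multTop_eq_card_of_map_svalsFin h, htop, min_comm, ← Fin.card_filter_val_lt]
  congr 1
  ext j
  simp only [mem_filter, mem_univ, true_and]
  split_ifs <;> simp [*, (abs_pos.2 hc).ne]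

end RectDiagonal

section TraceDuality

variable {m n : ℕ}

lemma mulVec_dotProduct_mulVec_self (P : Matrix (Fin m) (Fin n) ℝ) (v : Fin n → ℝ) :
    P *ᵥ v ⬝ᵥ P *ᵥ v = v ⬝ᵥ (Pᵀ * P) *ᵥ v := by
  rw [← mulVec_mulVec, dotProduct_mulVec v Pᵀ, vecMul_transpose]

lemma dotProduct_le_sqrt_mul_sqrt {ι : Type*} [Fintype ι] (v w : ι → ℝ) :
    v ⬝ᵥ w ≤ √(v ⬝ᵥ v) * √(w ⬝ᵥ w) := by
  simpa [dotProduct, sq] using Real.sum_mul_le_sqrt_mul_sqrt univ v w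

lemma frobInner_eq_trace (A B : Matrix (Fin m) (Fin n) ℝ) : frobInner A B = trace (Aᵀ * B) := by
  simp only [frobInner, trace, Matrix.diag, mul_apply, transpose_apply]
  exact sum_comm

lemma frobInner_mul_of_mul_transpose_eq_one (P Z : Matrix (Fin m) (Fin n) ℝ)
    {U : Matrix (Fin n) (Fin n) ℝ} (hU : U * Uᵀ = 1) :
    frobInner (P * U) (Z * U) = frobInner P Z := by
  rw [frobInner_eq_trace, frobInner_eq_trace, transpose_mul, Matrix.mul_assoc, trace_mul_comm,
    Matrix.mul_assoc, Matrix.mul_assoc, hU, Matrix.mul_one]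

theorem frobInner_le_traceNorm (P Z : Matrix (Fin m) (Fin n) ℝ)
    (hP : ∀ v, P *ᵥ v ⬝ᵥ P *ᵥ v ≤ v ⬝ᵥ v) : frobInner P Z ≤ traceNorm Z := by
  have hH : (Zᵀ * Z).IsHermitian := by simpa using isHermitian_conjTranspose_mul_self Z
  set U : Matrix (Fin n) (Fin n) ℝ := ↑hH.eigenvectorUnitary
  let u (k : Fin n) : Fin n → ℝ := hH.eigenvectorBasis k
  have hUUt : U * Uᵀ = 1 := by
    simpa [U, star_eq_conjTranspose] using Unitary.coe_mul_star_self hH.eigenvectorUnitary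
  have hUtU : Uᵀ * U = 1 := by
    simpa [U, star_eq_conjTranspose] using Unitary.coe_star_mul_self hH.eigenvectorUnitary
  have hu (k : Fin n) : u k ⬝ᵥ u k = 1 := by
    simpa [mul_apply, dotProduct, U, u] using congrFun (congrFun hUtU k) k
  have hZu (k : Fin n) : Z *ᵥ u k ⬝ᵥ Z *ᵥ u k = hH.eigenvalues k := by
    rw [mulVec_dotProduct_mulVec_self, hH.eigenvalues_eq]
    simp [u]
  have hcols : frobInner P Z = ∑ k, P *ᵥ u k ⬝ᵥ Z *ᵥ u k := by
    rw [← frobInner_mul_of_mul_transpose_eq_one P Z hUUt, frobInner, sum_comm]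
    rfl
  rw [hcols, traceNorm_eq_sum_sqrt_eigenvalues Z hH]
  refine sum_le_sum fun k _ => ?_
  calc P *ᵥ u k ⬝ᵥ Z *ᵥ u k ≤ √(P *ᵥ u k ⬝ᵥ P *ᵥ u k) * √(Z *ᵥ u k ⬝ᵥ Z *ᵥ u k) :=
        dotProduct_le_sqrt_mul_sqrt _ _
    _ ≤ √(u k ⬝ᵥ u k) * √(Z *ᵥ u k ⬝ᵥ Z *ᵥ u k) := by gcongr; exact hP _
    _ = √(hH.eigenvalues k) := by rw [hu, hZu, Real.sqrt_one, one_mul]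

lemma mulVec_rectDiagonal_dotProduct_self_le {c : ℕ → ℝ} (hc : ∀ k, |c k| ≤ 1) (v : Fin n → ℝ) :
    rectDiagonal m n c *ᵥ v ⬝ᵥ rectDiagonal m n c *ᵥ v ≤ v ⬝ᵥ v := by
  rw [mulVec_dotProduct_mulVec_self, transpose_rectDiagonal_mul_self]
  simp only [dotProduct, mulVec_diagonal]
  refine sum_le_sum fun j _ => ?_
  have : c j ^ 2 ≤ 1 := (sq_le_one_iff_abs_le_one _).2 (hc j)
  split_ifs <;> nlinarith [mul_self_nonneg (v j)]

lemma frobInner_rectDiagonal_one_le_traceNorm (Z : Matrix (Fin m) (Fin n) ℝ) :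
    frobInner (rectDiagonal m n 1) Z ≤ traceNorm Z :=
  frobInner_le_traceNorm _ Z (mulVec_rectDiagonal_dotProduct_self_le fun _ => by simp)

end TraceDuality

section Counterexample

variable {m n : ℕ}

lemma Emat_eq_rectDiagonal : Emat m n = rectDiagonal m n fun k => if k = 0 then 1 else 0 := by
  ext i j
  simp only [Emat, rectDiagonal, of_apply]
  split_ifs <;> first | rfl | omega

lemma Emat_sub_Amat (m n : ℕ) (σ : ℝ) : Emat m n - Amat m n σ = rectDiagonal m n fun _ => -σ := by
  ext i j
  simp only [Matrix.sub_apply, Emat, Amat, rectDiagonal, of_apply]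
  split_ifs <;> first | ring1 | omega

lemma rectDiagonal_const (c : ℝ) : (rectDiagonal m n fun _ => c) = c • rectDiagonal m n 1 := by
  ext i j
  simp [rectDiagonal]

lemma frobInner_rectDiagonal_one_Emat (hm : 0 < m) (hn : 0 < n) :
    frobInner (rectDiagonal m n 1) (Emat m n) = 1 := by
  rw [frobInner, Fintype.sum_eq_single ⟨0, hm⟩, Fintype.sum_eq_single ⟨0, hn⟩]
  all_goals simp only [Emat, rectDiagonal, of_apply, Pi.one_apply, ne_eq, Fin.ext_iff]
  · simp
  · intro j hj
    simp [hj]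
  · intro i hi
    simp [hi]

lemma traceNorm_Emat (hm : 0 < m) (hn : 0 < n) : traceNorm (Emat m n) = 1 := by
  rw [Emat_eq_rectDiagonal, traceNorm_rectDiagonal,
    Fintype.sum_eq_single ⟨0, hn⟩ fun j hj => by simp [Fin.val_ne_iff.2 hj]]
  simp [hm]

lemma rank_Emat (hm : 0 < m) (hn : 0 < n) : (Emat m n).rank = 1 := by
  rw [Emat_eq_rectDiagonal, rank_rectDiagonal, card_eq_one]
  refine ⟨⟨0, hn⟩, ?_⟩
  ext j
  simp only [mem_filter, mem_univ, true_and, mem_singleton, Fin.ext_iff]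
  split_ifs <;> simp [*]

lemma frobNorm_sub_Amat_sq_div_two (hm : 0 < m) (hn : 0 < n) (σ : ℝ)
    (Z : Matrix (Fin m) (Fin n) ℝ) :
    frobNorm (Z - Amat m n σ) ^ 2 / 2 = frobNorm (Emat m n - Amat m n σ) ^ 2 / 2
      + σ * (1 - frobInner (rectDiagonal m n 1) Z) + frobNorm (Z - Emat m n) ^ 2 / 2 := by
  rw [frobNorm_sub_sq_div_two (Amat m n σ) (Emat m n) Z, Emat_sub_Amat, rectDiagonal_const]
  simp only [frobInner_eq_inner, map_smul, map_sub, real_inner_smul_left, inner_sub_right]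
  rw [← frobInner_eq_inner, ← frobInner_eq_inner, frobInner_rectDiagonal_one_Emat hm hn]
  ring

end Counterexample

/-- For `f(X) = ½‖X − A‖_F²` with `A = diag(1+σ, σ, …, σ)` and
`σ > 0`: `f` is convex and `1`-smooth with gradient `X − A`; its unique minimizer
over the unit trace-norm ball is `X* = E_{1,1}`, of rank one, while
`∇f(X*) = diag(−σ,…,−σ)` has `#σ₁(∇f(X*)) = min{m,n}`, so the inequality
`max rank ≤ min multiplicity` can be strict. -/
theorem stmt18 {m n : ℕ} (hm : 2 ≤ m) (hn : 2 ≤ n) (σ : ℝ) (hσ : 0 < σ) :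
    ConvexOn ℝ Set.univ (fun X : Matrix (Fin m) (Fin n) ℝ =>
      frobNorm (X - Amat m n σ) ^ 2 / 2) ∧
    (∀ X : Matrix (Fin m) (Fin n) ℝ,
      HasFDerivAt (fun X : Matrix (Fin m) (Fin n) ℝ => frobNorm (X - Amat m n σ) ^ 2 / 2)
        (frobCLM (X - Amat m n σ)) X) ∧
    (∀ X Y : Matrix (Fin m) (Fin n) ℝ,
      frobNorm ((X - Amat m n σ) - (Y - Amat m n σ)) ≤ 1 * frobNorm (X - Y)) ∧
    traceNorm (Emat m n) ≤ 1 ∧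
    (∀ Z : Matrix (Fin m) (Fin n) ℝ, traceNorm Z ≤ 1 →
      frobNorm (Emat m n - Amat m n σ) ^ 2 / 2 ≤ frobNorm (Z - Amat m n σ) ^ 2 / 2) ∧
    (∀ Z : Matrix (Fin m) (Fin n) ℝ, traceNorm Z ≤ 1 →
      frobNorm (Z - Amat m n σ) ^ 2 / 2 = frobNorm (Emat m n - Amat m n σ) ^ 2 / 2 →
      Z = Emat m n) ∧
    (Emat m n).rank = 1 ∧
    (Emat m n - Amat m n σ
      = Matrix.of fun (i : Fin m) (j : Fin n) => if (i : ℕ) = (j : ℕ) then -σ else 0) ∧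
    multTop (Emat m n - Amat m n σ) = min m n ∧
    (Emat m n).rank < multTop (Emat m n - Amat m n σ) := by
  have hm₀ : 0 < m := by omega
  have hn₀ : 0 < n := by omega
  have hmult : multTop (Emat m n - Amat m n σ) = min m n := by
    rw [Emat_sub_Amat]
    exact multTop_rectDiagonal_const hm₀ hn₀ (neg_ne_zero.2 hσ.ne')
  have hgap (Z : Matrix (Fin m) (Fin n) ℝ) (hZ : traceNorm Z ≤ 1) :
      0 ≤ σ * (1 - frobInner (rectDiagonal m n 1) Z) :=
    mul_nonneg hσ.le (sub_nonneg.2 ((frobInner_rectDiagonal_one_le_traceNorm Z).trans hZ))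
  refine ⟨convexOn_frobNorm_sub_sq_div_two _, hasFDerivAt_frobNorm_sub_sq_div_two _,
    fun X Y => by rw [sub_sub_sub_cancel_right, one_mul], (traceNorm_Emat hm₀ hn₀).le,
    fun Z hZ => ?_, fun Z hZ hf => ?_, rank_Emat hm₀ hn₀, Emat_sub_Amat m n σ, hmult, ?_⟩
  · rw [frobNorm_sub_Amat_sq_div_two hm₀ hn₀ σ Z]
    nlinarith [hgap Z hZ, sq_nonneg (frobNorm (Z - Emat m n))]
  · rw [frobNorm_sub_Amat_sq_div_two hm₀ hn₀ σ Z] at hf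
    have h : frobNorm (Z - Emat m n) = 0 := by
      nlinarith [hgap Z hZ, sq_nonneg (frobNorm (Z - Emat m n))]
    exact sub_eq_zero.1 (frobNorm_eq_zero.1 h)
  · rw [rank_Emat hm₀ hn₀, hmult]
    omega
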